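/- Let f be a twice continuously differentiable real function of n variables with a local minimum at x̄ where the Hessian H is positive definite. Then for the quadratic approximation, the constrained minimum over {x : x_a = x̄_a + σ} of the second-order Taylor model f(x̄) + ½⟨x−x̄, H(x−x̄)⟩ equals f(x̄) + σ²/(2 (H⁻¹)_{aa}). -/

import Mathlib

open scoped Matrix

/-!
Put `u = H⁻¹ eₐ`. In the inner product `⟪v, w⟫_H = v ⬝ᵥ H w` one has `⟪u, v⟫_H = v a` and
`⟪u, u⟫_H = (H⁻¹)ₐₐ`, so Cauchy–Schwarz (completing the square along `u`) gives
`v ⬝ᵥ H v ≥ (v a)² / (H⁻¹)ₐₐ`, with equality at `v = (v a / (H⁻¹)ₐₐ) • u`. Writing `x = x̄ + v`,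
the constraint becomes `v a = σ`.
-/

namespace Matrix

theorem IsSymm.dotProduct_mulVec_comm {α m : Type*} [CommSemiring α] [Fintype m]
    {A : Matrix m m α} (hA : A.IsSymm) (v w : m → α) :
    v ⬝ᵥ (A *ᵥ w) = w ⬝ᵥ (A *ᵥ v) := by
  rw [dotProduct_mulVec, ← mulVec_transpose, hA.eq, dotProduct_comm]

variable {ι : Type*} [Fintype ι] [DecidableEq ι] {H : Matrix ι ι ℝ}

theorem PosDef.inv_mulVec_single_dotProduct_mulVec (hH : H.PosDef) (a : ι) (v : ι → ℝ) :
    (H⁻¹ *ᵥ Pi.single a 1) ⬝ᵥ (H *ᵥ v) = v a := by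
  have hsymm : H.IsSymm := isHermitian_iff_isSymm.mp hH.isHermitian
  rw [hsymm.dotProduct_mulVec_comm, mulVec_mulVec,
    mul_nonsing_inv H ((isUnit_iff_isUnit_det H).mp hH.isUnit), one_mulVec, dotProduct_single,
    mul_one]

theorem PosDef.inv_mulVec_single_dotProduct_mulVec_self (hH : H.PosDef) (a : ι) :
    (H⁻¹ *ᵥ Pi.single a 1) ⬝ᵥ (H *ᵥ (H⁻¹ *ᵥ Pi.single a 1)) = H⁻¹ a a := by
  rw [hH.inv_mulVec_single_dotProduct_mulVec, mulVec_single_one, col_apply]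

theorem PosDef.sq_div_inv_apply_le_dotProduct_mulVec (hH : H.PosDef) (a : ι) (v : ι → ℝ) :
    v a ^ 2 / H⁻¹ a a ≤ v ⬝ᵥ (H *ᵥ v) := by
  set u := H⁻¹ *ᵥ Pi.single a 1
  set β := H⁻¹ a a
  have hβ : 0 < β := hH.inv.diag_pos
  have huv : u ⬝ᵥ (H *ᵥ v) = v a := hH.inv_mulVec_single_dotProduct_mulVec a v
  have hvu : v ⬝ᵥ (H *ᵥ u) = v a :=
    (isHermitian_iff_isSymm.mp hH.isHermitian).dotProduct_mulVec_comm v u ▸ huv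
  have huu : u ⬝ᵥ (H *ᵥ u) = β := hH.inv_mulVec_single_dotProduct_mulVec_self a
  have hsq := hH.posSemidef.dotProduct_mulVec_nonneg (v - (v a / β) • u)
  simp only [star_trivial, mulVec_sub, mulVec_smul, dotProduct_sub, sub_dotProduct,
    dotProduct_smul, smul_dotProduct, huv, hvu, huu, smul_eq_mul] at hsq
  rw [div_le_iff₀ hβ]
  field_simp at hsq
  nlinarith

theorem PosDef.isLeast_dotProduct_mulVec_image_apply_eq (hH : H.PosDef) (a : ι) (s : ℝ) :
    IsLeast ((fun v ↦ v ⬝ᵥ (H *ᵥ v)) '' {v | v a = s}) (s ^ 2 / H⁻¹ a a) := by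
  have hβ : 0 < H⁻¹ a a := hH.inv.diag_pos
  refine ⟨⟨(s / H⁻¹ a a) • H⁻¹ *ᵥ Pi.single a 1, ?_, ?_⟩, ?_⟩
  · simp [hβ.ne']
  · simp only [mulVec_smul, dotProduct_smul, smul_dotProduct,
      hH.inv_mulVec_single_dotProduct_mulVec_self, smul_eq_mul]
    field_simp
  · rintro _ ⟨v, rfl, rfl⟩
    exact hH.sq_div_inv_apply_le_dotProduct_mulVec a v

end Matrix

theorem stmt_17_general (n : ℕ) (H : Matrix (Fin n) (Fin n) ℝ)
    (hpd : H.PosDef) (xbar : Fin n → ℝ) (σ fxbar : ℝ) (a : Fin n)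
    (q : (Fin n → ℝ) → ℝ)
    (hq : ∀ x, q x = fxbar + (1 / 2) * ((x - xbar) ⬝ᵥ H.mulVec (x - xbar))) :
    sInf (q '' {x | x a = xbar a + σ}) = fxbar + σ ^ 2 / (2 * H⁻¹ a a) := by
  have himage : q '' {x | x a = xbar a + σ} =
      (fun t ↦ fxbar + 1 / 2 * t) '' ((fun v ↦ v ⬝ᵥ (H *ᵥ v)) '' {v | v a = σ}) := by
    rw [Set.image_image]
    ext y
    constructor
    · rintro ⟨x, hx, rfl⟩
      exact ⟨x - xbar, by simp [show x a = _ from hx], (hq x).symm⟩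
    · rintro ⟨v, hv, rfl⟩
      exact ⟨xbar + v, by simp [show v a = σ from hv], by simp [hq]⟩
  have hmono : Monotone fun t : ℝ ↦ fxbar + 1 / 2 * t := fun _ _ h ↦ by dsimp; linarith
  rw [himage, (hmono.map_isLeast (hpd.isLeast_dotProduct_mulVec_image_apply_eq a σ)).csInf_eq]
  ring

theorem stmt_17 (n : ℕ) (H : Matrix (Fin n) (Fin n) ℝ)
    (hsymm : H.IsSymm) (hpd : H.PosDef) (xbar : Fin n → ℝ) (σ fxbar : ℝ) (a : Fin n)
    (q : (Fin n → ℝ) → ℝ)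
    (hq : ∀ x, q x = fxbar + (1 / 2) * ((x - xbar) ⬝ᵥ H.mulVec (x - xbar))) :
    sInf (q '' {x | x a = xbar a + σ}) = fxbar + σ ^ 2 / (2 * H⁻¹ a a) :=
  stmt_17_general n H hpd xbar σ fxbar a q hq
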